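/- If (σ,τ) and (σ',τ') are cohomologous normalized total 1-cocycles, say (σ',τ') = (σ,τ) + d^0 λ for some λ: F → K, then the map Φ: K♯_{σ',τ'}F → K♯_{σ,τ}F given by (K,F) ↦ (K + λ(F), F) is an equivalence of double groupoid extensions (it preserves both the horizontal and vertical compositions, the side maps, and commutes with the inclusion of K and projection to F). -/

import Mathlib

/-- A (discrete) double groupoid: a set of boxes `B` with two compatible groupoid
structures, with horizontal edge groupoid `H` and vertical edge groupoid `V`,
both over a common base `P`. -/
structure DGpd (B : Type*) (V : Type*) (H : Type*) (P : Type*) where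
  sV : V → P
  eV : V → P
  idV : P → V
  mulV : V → V → V
  invV : V → V
  sH : H → P
  eH : H → P
  idH : P → H
  mulH : H → H → H
  invH : H → H
  t : B → H
  b : B → H
  l : B → V
  r : B → V
  corner_tl : ∀ A, sH (t A) = sV (l A)
  corner_tr : ∀ A, eH (t A) = sV (r A)
  corner_bl : ∀ A, sH (b A) = eV (l A)
  corner_br : ∀ A, eH (b A) = eV (r A)
  idh : V → B
  idv : H → B
  hc : B → B → B
  vc : B → B → B
  hi : B → B
  vi : B → B
  -- groupoid axioms for V
  sV_id : ∀ p, sV (idV p) = p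
  eV_id : ∀ p, eV (idV p) = p
  sV_mul : ∀ g h, eV g = sV h → sV (mulV g h) = sV g
  eV_mul : ∀ g h, eV g = sV h → eV (mulV g h) = eV h
  mulV_assoc : ∀ g h k, eV g = sV h → eV h = sV k →
    mulV (mulV g h) k = mulV g (mulV h k)
  idV_mul : ∀ g, mulV (idV (sV g)) g = g
  mulV_id : ∀ g, mulV g (idV (eV g)) = g
  sV_inv : ∀ g, sV (invV g) = eV g
  eV_inv : ∀ g, eV (invV g) = sV g
  mulV_inv : ∀ g, mulV g (invV g) = idV (sV g)
  invV_mul : ∀ g, mulV (invV g) g = idV (eV g)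
  -- groupoid axioms for H
  sH_id : ∀ p, sH (idH p) = p
  eH_id : ∀ p, eH (idH p) = p
  sH_mul : ∀ x y, eH x = sH y → sH (mulH x y) = sH x
  eH_mul : ∀ x y, eH x = sH y → eH (mulH x y) = eH y
  mulH_assoc : ∀ x y z, eH x = sH y → eH y = sH z →
    mulH (mulH x y) z = mulH x (mulH y z)
  idH_mul : ∀ x, mulH (idH (sH x)) x = x
  mulH_id : ∀ x, mulH x (idH (eH x)) = x
  sH_inv : ∀ x, sH (invH x) = eH x
  eH_inv : ∀ x, eH (invH x) = sH x
  mulH_inv : ∀ x, mulH x (invH x) = idH (sH x)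
  invH_mul : ∀ x, mulH (invH x) x = idH (eH x)
  -- sides of identity boxes
  idh_t : ∀ g, t (idh g) = idH (sV g)
  idh_b : ∀ g, b (idh g) = idH (eV g)
  idh_l : ∀ g, l (idh g) = g
  idh_r : ∀ g, r (idh g) = g
  idv_t : ∀ x, t (idv x) = x
  idv_b : ∀ x, b (idv x) = x
  idv_l : ∀ x, l (idv x) = idV (sH x)
  idv_r : ∀ x, r (idv x) = idV (eH x)
  -- horizontal groupoid structure on boxes (base V)
  hc_t : ∀ A B, r A = l B → t (hc A B) = mulH (t A) (t B)
  hc_b : ∀ A B, r A = l B → b (hc A B) = mulH (b A) (b B)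
  hc_l : ∀ A B, r A = l B → l (hc A B) = l A
  hc_r : ∀ A B, r A = l B → r (hc A B) = r B
  hc_assoc : ∀ A B C, r A = l B → r B = l C → hc (hc A B) C = hc A (hc B C)
  idh_hc : ∀ A, hc (idh (l A)) A = A
  hc_idh : ∀ A, hc A (idh (r A)) = A
  hi_l : ∀ A, l (hi A) = r A
  hi_r : ∀ A, r (hi A) = l A
  hi_t : ∀ A, t (hi A) = invH (t A)
  hi_b : ∀ A, b (hi A) = invH (b A)
  hc_hi : ∀ A, hc A (hi A) = idh (l A)
  hi_hc : ∀ A, hc (hi A) A = idh (r A)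
  -- vertical groupoid structure on boxes (base H)
  vc_t : ∀ A B, b A = t B → t (vc A B) = t A
  vc_b : ∀ A B, b A = t B → b (vc A B) = b B
  vc_l : ∀ A B, b A = t B → l (vc A B) = mulV (l A) (l B)
  vc_r : ∀ A B, b A = t B → r (vc A B) = mulV (r A) (r B)
  vc_assoc : ∀ A B C, b A = t B → b B = t C → vc (vc A B) C = vc A (vc B C)
  idv_vc : ∀ A, vc (idv (t A)) A = A
  vc_idv : ∀ A, vc A (idv (b A)) = A
  vi_t : ∀ A, t (vi A) = b A
  vi_b : ∀ A, b (vi A) = t A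
  vi_l : ∀ A, l (vi A) = invV (l A)
  vi_r : ∀ A, r (vi A) = invV (r A)
  vc_vi : ∀ A, vc A (vi A) = idv (t A)
  vi_vc : ∀ A, vc (vi A) A = idv (b A)
  -- the identity boxes are functorial
  idh_mulV : ∀ g h, eV g = sV h → vc (idh g) (idh h) = idh (mulV g h)
  idv_mulH : ∀ x y, eH x = sH y → hc (idv x) (idv y) = idv (mulH x y)
  id_id : ∀ p, idh (idV p) = idv (idH p)
  -- the interchange law
  interchange : ∀ K L M N, r K = l L → r M = l N → b K = t M → b L = t N →
    vc (hc K L) (hc M N) = hc (vc K M) (vc L N)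

namespace DGpd

variable {B V H P : Type*} (D : DGpd B V H P)

/-- The totally degenerate box at a point. -/
def Theta (p : P) : B := D.idh (D.idV p)

/-- A box all of whose four sides are identities at `p`; i.e. an element of the
fiber `K(B)_p` of the abelian group bundle `K(B)`. -/
def InFiber (p : P) (A : B) : Prop :=
  D.t A = D.idH p ∧ D.b A = D.idH p ∧ D.l A = D.idV p ∧ D.r A = D.idV p

/-- A box belonging to the core groupoid: its top and right sides are identities. -/
def IsCore (A : B) : Prop :=
  (∃ p, D.t A = D.idH p) ∧ (∃ p, D.r A = D.idV p)

/-- Source of the core groupoid: the bottom-left vertex. -/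
def coreSrc (A : B) : P := D.sH (D.b A)

/-- Target of the core groupoid: the top-right vertex. -/
def coreTgt (A : B) : P := D.eH (D.t A)

/-- Core multiplication `E ∘ F`. -/
def coreMul (E F : B) : B :=
  D.vc (D.hc (D.idh (D.l F)) F) (D.hc E (D.idv (D.b F)))

/-- Core inversion `E ↦ E^{(-1)} = (E ⋅ id_v(b(E)^{-1}))^v`. -/
def coreInv (E : B) : B := D.vi (D.hc E (D.idv (D.invH (D.b E))))

/-- The core action of the core groupoid on boxes:
`E ⊸ A = {(id l(A), A) over (E, id b(A))}`. -/
def coreAct (E A : B) : B :=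
  D.vc (D.hc (D.idh (D.l A)) A) (D.hc E (D.idv (D.b A)))

end DGpd

/-- A bundle of abelian groups over `P`, presented with globally defined (partial in
spirit) operations: all group axioms are required fiberwise. -/
structure AbBundle (P : Type*) (K : Type*) where
  proj : K → P
  add : K → K → K
  zero : P → K
  neg : K → K
  proj_add : ∀ a b, proj a = proj b → proj (add a b) = proj a
  proj_zero : ∀ p, proj (zero p) = p
  proj_neg : ∀ a, proj (neg a) = proj a
  add_assoc : ∀ a b c, proj a = proj b → proj b = proj c →
    add (add a b) c = add a (add b c)
  add_comm : ∀ a b, proj a = proj b → add a b = add b a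
  zero_add : ∀ a, add (zero (proj a)) a = a
  add_neg : ∀ a, add a (neg a) = zero (proj a)

namespace AbBundle

variable {P K : Type*} (Kb : AbBundle P K)

/-- Subtraction in the bundle. -/
def sub (a b : K) : K := Kb.add a (Kb.neg b)

end AbBundle

/-- An action of a double groupoid `(B; V, H; P)` on an abelian group bundle
`K → P`: the groupoids `V` and `H` act by group bundle automorphisms, compatibly
via `l(A)⁻¹·(t(A)·k) = b(A)·(r(A)⁻¹·k)`; i.e. `K` is a module over the double
groupoid. -/
structure DAction {B V H P K : Type*} (D : DGpd B V H P) (Kb : AbBundle P K) where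
  aV : V → K → K
  aH : H → K → K
  aV_proj : ∀ g k, Kb.proj k = D.eV g → Kb.proj (aV g k) = D.sV g
  aV_id : ∀ k, aV (D.idV (Kb.proj k)) k = k
  aV_mul : ∀ g h k, D.eV g = D.sV h → Kb.proj k = D.eV h →
    aV (D.mulV g h) k = aV g (aV h k)
  aV_add : ∀ g k k', Kb.proj k = Kb.proj k' → Kb.proj k = D.eV g →
    aV g (Kb.add k k') = Kb.add (aV g k) (aV g k')
  aV_zero : ∀ g, aV g (Kb.zero (D.eV g)) = Kb.zero (D.sV g)
  aH_proj : ∀ x k, Kb.proj k = D.eH x → Kb.proj (aH x k) = D.sH x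
  aH_id : ∀ k, aH (D.idH (Kb.proj k)) k = k
  aH_mul : ∀ x y k, D.eH x = D.sH y → Kb.proj k = D.eH y →
    aH (D.mulH x y) k = aH x (aH y k)
  aH_add : ∀ x k k', Kb.proj k = Kb.proj k' → Kb.proj k = D.eH x →
    aH x (Kb.add k k') = Kb.add (aH x k) (aH x k')
  aH_zero : ∀ x, aH x (Kb.zero (D.eH x)) = Kb.zero (D.sH x)
  compat : ∀ A k, Kb.proj k = D.eH (D.t A) →
    aV (D.invV (D.l A)) (aH (D.t A) k) = aH (D.b A) (aV (D.invV (D.r A)) k)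

section CocycleDefs

variable {B V H P K : Type*} (D : DGpd B V H P) (Kb : AbBundle P K) (Ac : DAction D Kb)

/-- The vertical coboundary `d_V^{1,1} λ` of a `1×1`-cochain, on a vertically
composable pair: `λ(G) - λ({F over G}) + l(G)⁻¹·λ(F)`. -/
def dV11 (lam : B → K) (F G : B) : K :=
  Kb.add (Kb.sub (lam G) (lam (D.vc F G))) (Ac.aV (D.invV (D.l G)) (lam F))

/-- The horizontal coboundary `d_H^{1,1} λ` of a `1×1`-cochain, on a horizontally
composable pair: `b(F)·λ(G) - λ({F G}) + λ(F)`. -/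
def dH11 (lam : B → K) (F G : B) : K :=
  Kb.add (Kb.sub (Ac.aH (D.b F) (lam G)) (lam (D.hc F G))) (lam F)

/-- `(σ, τ)` is a total 1-cocycle: it takes values in the prescribed fibers, `σ` is a
vertical 2-cocycle, `τ` is a horizontal 2-cocycle, and the mixed (interchange)
compatibility holds. -/
def IsTotal1Cocycle (sg ta : B → B → K) : Prop :=
  (∀ F G, D.b F = D.t G → Kb.proj (sg F G) = D.eV (D.l G)) ∧
  (∀ F G, D.r F = D.l G → Kb.proj (ta F G) = D.eV (D.l F)) ∧
  (∀ F G Hb, D.r F = D.l G → D.r G = D.l Hb →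
      Kb.add (ta F G) (ta (D.hc F G) Hb) =
        Kb.add (ta F (D.hc G Hb)) (Ac.aH (D.b F) (ta G Hb))) ∧
  (∀ F G Hb, D.b F = D.t G → D.b G = D.t Hb →
      Kb.add (sg G Hb) (sg F (D.vc G Hb)) =
        Kb.add (Ac.aV (D.invV (D.l Hb)) (sg F G)) (sg (D.vc F G) Hb)) ∧
  (∀ F G Hb J, D.r F = D.l G → D.b F = D.t Hb → D.b G = D.t J → D.r Hb = D.l J →
      Kb.add (Kb.add (Ac.aV (D.invV (D.l Hb)) (ta F G)) (ta Hb J))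
          (sg (D.hc F G) (D.hc Hb J)) =
        Kb.add (Kb.add (Ac.aH (D.b Hb) (sg G J)) (sg F Hb))
          (ta (D.vc F Hb) (D.vc G J)))

/-- `(σ, τ)` is normalized: each cocycle vanishes as soon as one of its arguments is a
degenerate (identity) box. -/
def IsNormalizedPair (sg ta : B → B → K) : Prop :=
  (∀ F G, D.b F = D.t G → ((∃ g, F = D.idh g) ∨ (∃ g, G = D.idh g)) →
    sg F G = Kb.zero (D.eV (D.l G))) ∧
  (∀ F G, D.r F = D.l G → ((∃ x, F = D.idv x) ∨ (∃ x, G = D.idv x)) →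
    ta F G = Kb.zero (D.eV (D.l F)))

end CocycleDefs

section SmashDef

variable {B V H P K : Type*}

/-- The underlying set of the smash product `K ♯ F`: the fiber product
`K ×_{p,γ} F` along the left-bottom vertex map `γ`. -/
def SmashCarrier (D : DGpd B V H P) (Kb : AbBundle P K) : Type _ :=
  {x : K × B // Kb.proj x.1 = D.eV (D.l x.2)}

/-- `DB` is the smash-product double groupoid structure `K ♯_{σ,τ} F` on
`K ×_{p,γ} F` determined by the total 1-cocycle `(σ, τ)`. -/
def IsSmashStructure (D : DGpd B V H P) (Kb : AbBundle P K) (Ac : DAction D Kb)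
    (sg ta : B → B → K) (DB : DGpd (SmashCarrier D Kb) V H P) : Prop :=
  DB.sV = D.sV ∧ DB.eV = D.eV ∧ DB.idV = D.idV ∧ DB.mulV = D.mulV ∧
  DB.invV = D.invV ∧
  DB.sH = D.sH ∧ DB.eH = D.eH ∧ DB.idH = D.idH ∧ DB.mulH = D.mulH ∧
  DB.invH = D.invH ∧
  (∀ x, DB.t x = D.t x.val.2) ∧ (∀ x, DB.b x = D.b x.val.2) ∧
  (∀ x, DB.l x = D.l x.val.2) ∧ (∀ x, DB.r x = D.r x.val.2) ∧
  (∀ g : V, (DB.idh g).val = (Kb.zero (D.eV g), D.idh g)) ∧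
  (∀ x : H, (DB.idv x).val = (Kb.zero (D.sH x), D.idv x)) ∧
  (∀ x y, D.r x.val.2 = D.l y.val.2 →
    (DB.hc x y).val =
      (Kb.add (Kb.add x.val.1 (Ac.aH (D.b x.val.2) y.val.1)) (ta x.val.2 y.val.2),
        D.hc x.val.2 y.val.2)) ∧
  (∀ x y, D.b x.val.2 = D.t y.val.2 →
    (DB.vc x y).val =
      (Kb.add (Kb.add (Ac.aV (D.invV (D.l y.val.2)) x.val.1) y.val.1)
          (sg x.val.2 y.val.2),
        D.vc x.val.2 y.val.2))

end SmashDef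

/-!
The shift `Φ(K, F) = (K + λ(F), F)` only changes first components, so it commutes with the side
maps and the projection to `F`. For the compositions, both twisted products have the shape
`(α K + β L + c(F, G), F ∘ G)` with `α, β` additive and `(σ', τ') = (σ, τ) + d⁰λ`, where
`d⁰λ(F, G) = β λ(G) - λ(F ∘ G) + α λ(F)`; so `Φ` is multiplicative by a single rearrangement in the
abelian group of the fiber. Finally, the unit laws of the two extensions force `τ` and `τ'` to vanish
on `(idh g, idh g)` and `σ`, `σ'` on `(idv x, idv x)`, whence `λ` vanishes on identity boxes and `Φ`
preserves identities.
-/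

namespace AbBundle

variable {P K : Type*} (Kb : AbBundle P K)

abbrev Fiber (p : P) : Type _ := {k : K // Kb.proj k = p}

instance (p : P) : Add (Kb.Fiber p) :=
  ⟨fun a b => ⟨Kb.add a.1 b.1, (Kb.proj_add a.1 b.1 (a.2.trans b.2.symm)).trans a.2⟩⟩

instance (p : P) : Zero (Kb.Fiber p) := ⟨⟨Kb.zero p, Kb.proj_zero p⟩⟩

instance (p : P) : Neg (Kb.Fiber p) :=
  ⟨fun a => ⟨Kb.neg a.1, (Kb.proj_neg a.1).trans a.2⟩⟩

theorem zero_add_of_proj_eq {p : P} {a : K} (ha : Kb.proj a = p) : Kb.add (Kb.zero p) a = a := by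
  subst ha
  exact Kb.zero_add a

theorem add_zero_of_proj_eq {p : P} {a : K} (ha : Kb.proj a = p) : Kb.add a (Kb.zero p) = a := by
  rw [Kb.add_comm a _ (ha.trans (Kb.proj_zero p).symm), Kb.zero_add_of_proj_eq ha]

instance (p : P) : AddCommGroup (Kb.Fiber p) where
  add_assoc a b c := Subtype.ext
    (Kb.add_assoc a.1 b.1 c.1 (a.2.trans b.2.symm) (b.2.trans c.2.symm))
  zero_add a := Subtype.ext (Kb.zero_add_of_proj_eq a.2)
  add_zero a := Subtype.ext (Kb.add_zero_of_proj_eq a.2)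
  add_comm a b := Subtype.ext (Kb.add_comm a.1 b.1 (a.2.trans b.2.symm))
  neg_add_cancel a := Subtype.ext (by
    change Kb.add (Kb.neg a.1) a.1 = Kb.zero p
    rw [Kb.add_comm _ _ (Kb.proj_neg a.1), Kb.add_neg, a.2])
  nsmul := nsmulRec
  zsmul := zsmulRec

variable {Kb}

theorem add_neg_cancel_right {p : P} {a b : K} (ha : Kb.proj a = p) (hb : Kb.proj b = p) :
    Kb.add (Kb.add a b) (Kb.neg b) = a :=
  congrArg Subtype.val
    (_root_.add_neg_cancel_right (⟨a, ha⟩ : Kb.Fiber p) ⟨b, hb⟩)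

theorem neg_add_cancel_right {p : P} {a b : K} (ha : Kb.proj a = p) (hb : Kb.proj b = p) :
    Kb.add (Kb.add a (Kb.neg b)) b = a :=
  congrArg Subtype.val
    (_root_.neg_add_cancel_right (⟨a, ha⟩ : Kb.Fiber p) ⟨b, hb⟩)

theorem add_coboundary_rearrange {p : P} {a b c u v w : K}
    (ha : Kb.proj a = p) (hb : Kb.proj b = p) (hc : Kb.proj c = p)
    (hu : Kb.proj u = p) (hv : Kb.proj v = p) (hw : Kb.proj w = p) :
    Kb.add (Kb.add (Kb.add a b) (Kb.add c (Kb.add (Kb.sub v w) u))) w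
      = Kb.add (Kb.add (Kb.add a u) (Kb.add b v)) c :=
  congrArg Subtype.val
    (show ((⟨a, ha⟩ + ⟨b, hb⟩ : Kb.Fiber p) +
        (⟨c, hc⟩ + ((⟨v, hv⟩ + -(⟨w, hw⟩ : Kb.Fiber p)) + ⟨u, hu⟩))) + ⟨w, hw⟩
      = ((⟨a, ha⟩ + ⟨u, hu⟩) + (⟨b, hb⟩ + ⟨v, hv⟩)) + ⟨c, hc⟩ by abel)

end AbBundle

namespace DGpd

variable {B V H P : Type*} (D : DGpd B V H P)

theorem invV_idV (p : P) : D.invV (D.idV p) = D.idV p := by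
  have h := D.mulV_id (D.invV (D.idV p))
  rw [D.eV_inv, D.sV_id] at h
  rw [← h, ← D.eV_id p, D.invV_mul, D.eV_id]

theorem hc_idh_self (g : V) : D.hc (D.idh g) (D.idh g) = D.idh g := by
  simpa only [D.idh_r] using D.hc_idh (D.idh g)

theorem vc_idv_self (x : H) : D.vc (D.idv x) (D.idv x) = D.idv x := by
  simpa only [D.idv_b] using D.vc_idv (D.idv x)

end DGpd

namespace DAction

variable {B V H P K : Type*} {D : DGpd B V H P} {Kb : AbBundle P K} (Ac : DAction D Kb)

theorem aH_idH {p : P} {k : K} (hk : Kb.proj k = p) : Ac.aH (D.idH p) k = k := by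
  subst hk
  exact Ac.aH_id k

theorem aV_invV_idV {p : P} {k : K} (hk : Kb.proj k = p) :
    Ac.aV (D.invV (D.idV p)) k = k := by
  subst hk
  rw [D.invV_idV]
  exact Ac.aV_id k

end DAction

section Coboundary

variable {B V H P K : Type*} {D : DGpd B V H P} {Kb : AbBundle P K} {Ac : DAction D Kb}
  {lam : B → K}

theorem dH11_idh_self (hlam : ∀ F : B, Kb.proj (lam F) = D.eV (D.l F)) (g : V) :
    dH11 D Kb Ac lam (D.idh g) (D.idh g) = lam (D.idh g) := by
  have hp : Kb.proj (lam (D.idh g)) = D.eV g := by rw [hlam, D.idh_l]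
  rw [dH11, AbBundle.sub, D.hc_idh_self, D.idh_b, Ac.aH_idH hp,
    AbBundle.neg_add_cancel_right hp hp]

theorem dV11_idv_self (hlam : ∀ F : B, Kb.proj (lam F) = D.eV (D.l F)) (x : H) :
    dV11 D Kb Ac lam (D.idv x) (D.idv x) = lam (D.idv x) := by
  have hp : Kb.proj (lam (D.idv x)) = D.sH x := by rw [hlam, D.idv_l, D.eV_id]
  rw [dV11, AbBundle.sub, D.vc_idv_self, D.idv_l, Ac.aV_invV_idV hp,
    AbBundle.neg_add_cancel_right hp hp]

end Coboundary

namespace IsSmashStructure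

variable {B V H P K : Type*} {D : DGpd B V H P} {Kb : AbBundle P K} {Ac : DAction D Kb}
  {sg ta : B → B → K} {DB : DGpd (SmashCarrier D Kb) V H P}

theorem t_eq (h : IsSmashStructure D Kb Ac sg ta DB) (x : SmashCarrier D Kb) :
    DB.t x = D.t x.val.2 := by
  obtain ⟨-, -, -, -, -, -, -, -, -, -, ht, -⟩ := h
  exact ht x

theorem b_eq (h : IsSmashStructure D Kb Ac sg ta DB) (x : SmashCarrier D Kb) :
    DB.b x = D.b x.val.2 := by
  obtain ⟨-, -, -, -, -, -, -, -, -, -, -, hb, -⟩ := h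
  exact hb x

theorem l_eq (h : IsSmashStructure D Kb Ac sg ta DB) (x : SmashCarrier D Kb) :
    DB.l x = D.l x.val.2 := by
  obtain ⟨-, -, -, -, -, -, -, -, -, -, -, -, hl, -⟩ := h
  exact hl x

theorem r_eq (h : IsSmashStructure D Kb Ac sg ta DB) (x : SmashCarrier D Kb) :
    DB.r x = D.r x.val.2 := by
  obtain ⟨-, -, -, -, -, -, -, -, -, -, -, -, -, hr, -⟩ := h
  exact hr x

theorem idh_val (h : IsSmashStructure D Kb Ac sg ta DB) (g : V) :
    (DB.idh g).val = (Kb.zero (D.eV g), D.idh g) := by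
  obtain ⟨-, -, -, -, -, -, -, -, -, -, -, -, -, -, hidh, -⟩ := h
  exact hidh g

theorem idv_val (h : IsSmashStructure D Kb Ac sg ta DB) (x : H) :
    (DB.idv x).val = (Kb.zero (D.sH x), D.idv x) := by
  obtain ⟨-, -, -, -, -, -, -, -, -, -, -, -, -, -, -, hidv, -⟩ := h
  exact hidv x

theorem hc_val (h : IsSmashStructure D Kb Ac sg ta DB) {x y : SmashCarrier D Kb}
    (hxy : D.r x.val.2 = D.l y.val.2) :
    (DB.hc x y).val =
      (Kb.add (Kb.add x.val.1 (Ac.aH (D.b x.val.2) y.val.1)) (ta x.val.2 y.val.2),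
        D.hc x.val.2 y.val.2) := by
  obtain ⟨-, -, -, -, -, -, -, -, -, -, -, -, -, -, -, -, hhc, -⟩ := h
  exact hhc x y hxy

theorem vc_val (h : IsSmashStructure D Kb Ac sg ta DB) {x y : SmashCarrier D Kb}
    (hxy : D.b x.val.2 = D.t y.val.2) :
    (DB.vc x y).val =
      (Kb.add (Kb.add (Ac.aV (D.invV (D.l y.val.2)) x.val.1) y.val.1) (sg x.val.2 y.val.2),
        D.vc x.val.2 y.val.2) := by
  obtain ⟨-, -, -, -, -, -, -, -, -, -, -, -, -, -, -, -, -, hvc⟩ := h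
  exact hvc x y hxy

theorem ta_idh_self (h : IsSmashStructure D Kb Ac sg ta DB)
    (htaP : ∀ F G, D.r F = D.l G → Kb.proj (ta F G) = D.eV (D.l F)) (g : V) :
    ta (D.idh g) (D.idh g) = Kb.zero (D.eV g) := by
  have hp : Kb.proj (ta (D.idh g) (D.idh g)) = D.eV g := by
    rw [htaP _ _ (by rw [D.idh_r, D.idh_l]), D.idh_l]
  have hxy : D.r (DB.idh g).val.2 = D.l (DB.idh g).val.2 := by
    rw [h.idh_val, D.idh_r, D.idh_l]
  have hval := h.hc_val hxy
  rw [DB.hc_idh_self, h.idh_val, D.idh_b, Ac.aH_idH (Kb.proj_zero _),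
    Kb.zero_add_of_proj_eq (Kb.proj_zero _), Kb.zero_add_of_proj_eq hp] at hval
  exact (Prod.mk.inj hval).1.symm

theorem sg_idv_self (h : IsSmashStructure D Kb Ac sg ta DB)
    (hsgP : ∀ F G, D.b F = D.t G → Kb.proj (sg F G) = D.eV (D.l G)) (x : H) :
    sg (D.idv x) (D.idv x) = Kb.zero (D.sH x) := by
  have hp : Kb.proj (sg (D.idv x) (D.idv x)) = D.sH x := by
    rw [hsgP _ _ (by rw [D.idv_b, D.idv_t]), D.idv_l, D.eV_id]
  have hxy : D.b (DB.idv x).val.2 = D.t (DB.idv x).val.2 := by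
    rw [h.idv_val, D.idv_b, D.idv_t]
  have hval := h.vc_val hxy
  rw [DB.vc_idv_self, h.idv_val, D.idv_l, Ac.aV_invV_idV (Kb.proj_zero _),
    Kb.zero_add_of_proj_eq (Kb.proj_zero _), Kb.zero_add_of_proj_eq hp] at hval
  exact (Prod.mk.inj hval).1.symm

end IsSmashStructure

section Normalization

variable {B V H P K : Type*} {D : DGpd B V H P} {Kb : AbBundle P K} {Ac : DAction D Kb}
  {sg ta sg' ta' : B → B → K} {DB DB' : DGpd (SmashCarrier D Kb) V H P} {lam : B → K}

theorem lam_idh_eq_zero (hlam : ∀ F : B, Kb.proj (lam F) = D.eV (D.l F)) (h : IsSmashStructure D Kb Ac sg ta DB)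
    (h' : IsSmashStructure D Kb Ac sg' ta' DB')
    (htaP : ∀ F G, D.r F = D.l G → Kb.proj (ta F G) = D.eV (D.l F))
    (htaP' : ∀ F G, D.r F = D.l G → Kb.proj (ta' F G) = D.eV (D.l F))
    (hta : ∀ F G, D.r F = D.l G → ta' F G = Kb.add (ta F G) (dH11 D Kb Ac lam F G)) (g : V) :
    lam (D.idh g) = Kb.zero (D.eV g) := by
  have hp : Kb.proj (lam (D.idh g)) = D.eV g := by rw [hlam, D.idh_l]
  have hcob := hta (D.idh g) (D.idh g) (by rw [D.idh_r, D.idh_l])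
  rw [h'.ta_idh_self htaP', h.ta_idh_self htaP, dH11_idh_self hlam,
    Kb.zero_add_of_proj_eq hp] at hcob
  exact hcob.symm

theorem lam_idv_eq_zero (hlam : ∀ F : B, Kb.proj (lam F) = D.eV (D.l F)) (h : IsSmashStructure D Kb Ac sg ta DB)
    (h' : IsSmashStructure D Kb Ac sg' ta' DB')
    (hsgP : ∀ F G, D.b F = D.t G → Kb.proj (sg F G) = D.eV (D.l G))
    (hsgP' : ∀ F G, D.b F = D.t G → Kb.proj (sg' F G) = D.eV (D.l G))
    (hsg : ∀ F G, D.b F = D.t G → sg' F G = Kb.add (sg F G) (dV11 D Kb Ac lam F G)) (x : H) :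
    lam (D.idv x) = Kb.zero (D.sH x) := by
  have hp : Kb.proj (lam (D.idv x)) = D.sH x := by rw [hlam, D.idv_l, D.eV_id]
  have hcob := hsg (D.idv x) (D.idv x) (by rw [D.idv_b, D.idv_t])
  rw [h'.sg_idv_self hsgP', h.sg_idv_self hsgP, dV11_idv_self hlam,
    Kb.zero_add_of_proj_eq hp] at hcob
  exact hcob.symm

end Normalization

section Shift

variable {B V H P K : Type*} {D : DGpd B V H P} {Kb : AbBundle P K} {Ac : DAction D Kb}
  {sg ta sg' ta' : B → B → K} {DB DB' : DGpd (SmashCarrier D Kb) V H P}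
  {lam : B → K} (hlam : ∀ F : B, Kb.proj (lam F) = D.eV (D.l F))

def smashShift : SmashCarrier D Kb → SmashCarrier D Kb :=
  fun x => ⟨(Kb.add x.val.1 (lam x.val.2), x.val.2),
    (Kb.proj_add _ _ (x.2.trans (hlam _).symm)).trans x.2⟩

theorem smashShift_val (x : SmashCarrier D Kb) :
    (smashShift hlam x).val = (Kb.add x.val.1 (lam x.val.2), x.val.2) :=
  rfl

theorem smashShift_bijective : Function.Bijective (smashShift hlam) := by
  have hneg : ∀ F : B, Kb.proj (Kb.neg (lam F)) = D.eV (D.l F) :=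
    fun F => (Kb.proj_neg _).trans (hlam F)
  refine Function.bijective_iff_has_inverse.mpr ⟨smashShift hneg, fun x => ?_, fun x => ?_⟩
  · exact Subtype.ext (Prod.ext (AbBundle.add_neg_cancel_right x.2 (hlam _)) rfl)
  · exact Subtype.ext (Prod.ext (AbBundle.neg_add_cancel_right x.2 (hlam _)) rfl)

theorem smashShift_eq_self {x : SmashCarrier D Kb}
    (hx : lam x.val.2 = Kb.zero (D.eV (D.l x.val.2))) : smashShift hlam x = x :=
  Subtype.ext (Prod.ext (by rw [smashShift_val, hx, Kb.add_zero_of_proj_eq x.2]) rfl)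

theorem smashShift_idh (h : IsSmashStructure D Kb Ac sg ta DB)
    (h' : IsSmashStructure D Kb Ac sg' ta' DB') {g : V}
    (hg : lam (D.idh g) = Kb.zero (D.eV g)) : smashShift hlam (DB'.idh g) = DB.idh g :=
  Subtype.ext (by
    rw [smashShift_val, h'.idh_val, h.idh_val, hg, Kb.zero_add_of_proj_eq (Kb.proj_zero _)])

theorem smashShift_idv (h : IsSmashStructure D Kb Ac sg ta DB)
    (h' : IsSmashStructure D Kb Ac sg' ta' DB') {x : H}
    (hx : lam (D.idv x) = Kb.zero (D.sH x)) : smashShift hlam (DB'.idv x) = DB.idv x :=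
  Subtype.ext (by
    rw [smashShift_val, h'.idv_val, h.idv_val, hx, Kb.zero_add_of_proj_eq (Kb.proj_zero _)])

theorem smashShift_hc (h : IsSmashStructure D Kb Ac sg ta DB)
    (h' : IsSmashStructure D Kb Ac sg' ta' DB')
    (htaP : ∀ F G, D.r F = D.l G → Kb.proj (ta F G) = D.eV (D.l F))
    (hta : ∀ F G, D.r F = D.l G → ta' F G = Kb.add (ta F G) (dH11 D Kb Ac lam F G))
    {x y : SmashCarrier D Kb} (hxy : D.r x.val.2 = D.l y.val.2) :
    smashShift hlam (DB'.hc x y) = DB.hc (smashShift hlam x) (smashShift hlam y) := by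
  have hbG : Kb.proj y.val.1 = D.eH (D.b x.val.2) := y.2.trans (by rw [D.corner_br, hxy])
  have hlamG : Kb.proj (lam y.val.2) = D.eH (D.b x.val.2) :=
    (hlam _).trans (by rw [D.corner_br, hxy])
  have hlamFG : Kb.proj (lam (D.hc x.val.2 y.val.2)) = D.eV (D.l x.val.2) := by
    rw [hlam, D.hc_l _ _ hxy]
  apply Subtype.ext
  rw [h.hc_val (x := smashShift hlam x) (y := smashShift hlam y) hxy, smashShift_val,
    h'.hc_val hxy, smashShift_val, smashShift_val, hta _ _ hxy, dH11,
    Ac.aH_add _ _ _ (hbG.trans hlamG.symm) hbG]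
  refine Prod.ext (AbBundle.add_coboundary_rearrange x.2 ?_ (htaP _ _ hxy) (hlam _) ?_ hlamFG) rfl
  · exact (Ac.aH_proj _ _ hbG).trans (D.corner_bl _)
  · exact (Ac.aH_proj _ _ hlamG).trans (D.corner_bl _)

theorem smashShift_vc (h : IsSmashStructure D Kb Ac sg ta DB)
    (h' : IsSmashStructure D Kb Ac sg' ta' DB')
    (hsgP : ∀ F G, D.b F = D.t G → Kb.proj (sg F G) = D.eV (D.l G))
    (hsg : ∀ F G, D.b F = D.t G → sg' F G = Kb.add (sg F G) (dV11 D Kb Ac lam F G))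
    {x y : SmashCarrier D Kb} (hxy : D.b x.val.2 = D.t y.val.2) :
    smashShift hlam (DB'.vc x y) = DB.vc (smashShift hlam x) (smashShift hlam y) := by
  have hFG : D.eV (D.l x.val.2) = D.sV (D.l y.val.2) := by rw [← D.corner_bl, hxy, D.corner_tl]
  have hlF : Kb.proj x.val.1 = D.eV (D.invV (D.l y.val.2)) := x.2.trans (by rw [hFG, D.eV_inv])
  have hlamF : Kb.proj (lam x.val.2) = D.eV (D.invV (D.l y.val.2)) :=
    (hlam _).trans (by rw [hFG, D.eV_inv])
  have hlamFG : Kb.proj (lam (D.vc x.val.2 y.val.2)) = D.eV (D.l y.val.2) := by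
    rw [hlam, D.vc_l _ _ hxy, D.eV_mul _ _ hFG]
  apply Subtype.ext
  rw [h.vc_val (x := smashShift hlam x) (y := smashShift hlam y) hxy, smashShift_val,
    h'.vc_val hxy, smashShift_val, smashShift_val, hsg _ _ hxy, dV11,
    Ac.aV_add _ _ _ (hlF.trans hlamF.symm) hlF]
  refine Prod.ext (AbBundle.add_coboundary_rearrange ?_ y.2 (hsgP _ _ hxy) ?_ (hlam _) hlamFG) rfl
  · exact (Ac.aV_proj _ _ hlF).trans (D.sV_inv _)
  · exact (Ac.aV_proj _ _ hlamF).trans (D.sV_inv _)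

end Shift

section Stmt10

variable {B V H P K : Type*}

theorem cohomologous_cocycles_give_equivalent_extensions_general
    (D : DGpd B V H P) (Kb : AbBundle P K) (Ac : DAction D Kb)
    (sg ta sg' ta' : B → B → K)
    (hco : IsTotal1Cocycle D Kb Ac sg ta)
    (hco' : IsTotal1Cocycle D Kb Ac sg' ta')
    (lam : B → K) (hlam : ∀ F : B, Kb.proj (lam F) = D.eV (D.l F))
    (hsg : ∀ F G, D.b F = D.t G → sg' F G = Kb.add (sg F G) (dV11 D Kb Ac lam F G))
    (hta : ∀ F G, D.r F = D.l G → ta' F G = Kb.add (ta F G) (dH11 D Kb Ac lam F G))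
    (DB : DGpd (SmashCarrier D Kb) V H P)
    (DB' : DGpd (SmashCarrier D Kb) V H P)
    (h1 : IsSmashStructure D Kb Ac sg ta DB)
    (h2 : IsSmashStructure D Kb Ac sg' ta' DB') :
    ∃ Phi : SmashCarrier D Kb → SmashCarrier D Kb,
      (∀ x, (Phi x).val = (Kb.add x.val.1 (lam x.val.2), x.val.2)) ∧
      Function.Bijective Phi ∧
      (∀ x, DB.t (Phi x) = DB'.t x) ∧ (∀ x, DB.b (Phi x) = DB'.b x) ∧
      (∀ x, DB.l (Phi x) = DB'.l x) ∧ (∀ x, DB.r (Phi x) = DB'.r x) ∧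
      (∀ x y, D.r x.val.2 = D.l y.val.2 →
        Phi (DB'.hc x y) = DB.hc (Phi x) (Phi y)) ∧
      (∀ x y, D.b x.val.2 = D.t y.val.2 →
        Phi (DB'.vc x y) = DB.vc (Phi x) (Phi y)) ∧
      (∀ g : V, Phi (DB'.idh g) = DB.idh g) ∧
      (∀ x : H, Phi (DB'.idv x) = DB.idv x) ∧
      (∀ x : SmashCarrier D Kb, (∃ p, x.val.2 = D.Theta p) → Phi x = x) := by
  have hidh := lam_idh_eq_zero hlam h1 h2 hco.2.1 hco'.2.1 hta
  have hidv := lam_idv_eq_zero hlam h1 h2 hco.1 hco'.1 hsg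
  refine ⟨smashShift hlam, smashShift_val hlam, smashShift_bijective hlam,
    fun x => by rw [h1.t_eq, h2.t_eq]; rfl, fun x => by rw [h1.b_eq, h2.b_eq]; rfl,
    fun x => by rw [h1.l_eq, h2.l_eq]; rfl, fun x => by rw [h1.r_eq, h2.r_eq]; rfl,
    fun _ _ => smashShift_hc hlam h1 h2 hco.2.1 hta,
    fun _ _ => smashShift_vc hlam h1 h2 hco.1 hsg,
    fun g => smashShift_idh hlam h1 h2 (hidh g), fun x => smashShift_idv hlam h1 h2 (hidv x),
    fun x ⟨p, hp⟩ => smashShift_eq_self hlam ?_⟩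
  rw [hp, DGpd.Theta, hidh, D.idh_l]

/-- If `(σ,τ)` and `(σ',τ')` are cohomologous normalized total
1-cocycles, say `(σ',τ') = (σ,τ) + d⁰λ`, then `Φ : K ♯_{σ',τ'} F → K ♯_{σ,τ} F`,
`(K,F) ↦ (K + λ(F), F)`, is an equivalence of double groupoid extensions: it is
bijective, preserves both compositions, the side maps and the identity boxes, and
commutes with the inclusion of `K` and with the projection onto `F`. -/
theorem cohomologous_cocycles_give_equivalent_extensions
    (D : DGpd B V H P) (Kb : AbBundle P K) (Ac : DAction D Kb)
    (sg ta sg' ta' : B → B → K)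
    (hco : IsTotal1Cocycle D Kb Ac sg ta) (hno : IsNormalizedPair D Kb sg ta)
    (hco' : IsTotal1Cocycle D Kb Ac sg' ta') (hno' : IsNormalizedPair D Kb sg' ta')
    (lam : B → K) (hlam : ∀ F : B, Kb.proj (lam F) = D.eV (D.l F))
    (hsg : ∀ F G, D.b F = D.t G → sg' F G = Kb.add (sg F G) (dV11 D Kb Ac lam F G))
    (hta : ∀ F G, D.r F = D.l G → ta' F G = Kb.add (ta F G) (dH11 D Kb Ac lam F G))
    (DB : DGpd (SmashCarrier D Kb) V H P)
    (DB' : DGpd (SmashCarrier D Kb) V H P)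
    (h1 : IsSmashStructure D Kb Ac sg ta DB)
    (h2 : IsSmashStructure D Kb Ac sg' ta' DB') :
    ∃ Phi : SmashCarrier D Kb → SmashCarrier D Kb,
      (∀ x, (Phi x).val = (Kb.add x.val.1 (lam x.val.2), x.val.2)) ∧
      Function.Bijective Phi ∧
      (∀ x, DB.t (Phi x) = DB'.t x) ∧ (∀ x, DB.b (Phi x) = DB'.b x) ∧
      (∀ x, DB.l (Phi x) = DB'.l x) ∧ (∀ x, DB.r (Phi x) = DB'.r x) ∧
      (∀ x y, D.r x.val.2 = D.l y.val.2 →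
        Phi (DB'.hc x y) = DB.hc (Phi x) (Phi y)) ∧
      (∀ x y, D.b x.val.2 = D.t y.val.2 →
        Phi (DB'.vc x y) = DB.vc (Phi x) (Phi y)) ∧
      (∀ g : V, Phi (DB'.idh g) = DB.idh g) ∧
      (∀ x : H, Phi (DB'.idv x) = DB.idv x) ∧
      (∀ x : SmashCarrier D Kb, (∃ p, x.val.2 = D.Theta p) → Phi x = x) :=
  cohomologous_cocycles_give_equivalent_extensions_general D Kb Ac sg ta sg' ta' hco hco' lam hlam
    hsg hta DB DB' h1 h2

end Stmt10
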